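/- Let X be a convex polyomino such that V(X) ⊆ ℕ² is a sublattice of ℕ² with minimum (0,0) and maximum (m,n). Then every maximal chain of V(X) has exactly m+n+1 elements and is of the form μ_0 = (0,0) < μ_1 < ⋯ < μ_{m+n} = (m,n) with μ_i − μ_{i−1} ∈ {(1,0),(0,1)} for all 1 ≤ i ≤ m+n; i.e., every maximal chain of V(X) is a monotone lattice path from (0,0) to (m,n) with unit horizontal and vertical steps through vertices of X. -/

import Mathlib

/-!  Cells in ℤ² are identified with their top-right corners: the cell `C v`
is the unit square `[v.1 - 1, v.1] × [v.2 - 1, v.2] ⊆ ℝ²`. -/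

/-- Two cells (identified by their top-right corners) are adjacent if they share an edge. -/
def Adj (c d : ℤ × ℤ) : Prop :=
  (c.1 = d.1 ∧ (c.2 = d.2 + 1 ∨ d.2 = c.2 + 1)) ∨
  (c.2 = d.2 ∧ (c.1 = d.1 + 1 ∨ d.1 = c.1 + 1))

/-- A polyomino: a nonempty finite set of cells, connected under adjacency. -/
def IsPolyomino (X : Finset (ℤ × ℤ)) : Prop :=
  X.Nonempty ∧ ∀ c ∈ X, ∀ d ∈ X,
    Relation.ReflTransGen (fun a b => a ∈ X ∧ b ∈ X ∧ Adj a b) c d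

/-- A polyomino is convex if it is both row-convex and column-convex. -/
def IsConvexPoly (X : Finset (ℤ × ℤ)) : Prop :=
  (∀ a b x y : ℤ, (a, y) ∈ X → (b, y) ∈ X → a ≤ x → x ≤ b → (x, y) ∈ X) ∧
  (∀ a b x y : ℤ, (y, a) ∈ X → (y, b) ∈ X → a ≤ x → x ≤ b → (y, x) ∈ X)

/-- `X` is thin if it contains no 2 × 2 block of four cells. -/
def IsThin (X : Finset (ℤ × ℤ)) : Prop :=
  ¬ ∃ w : ℤ × ℤ, w ∈ X ∧ w + ((1, 0) : ℤ × ℤ) ∈ X ∧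
    w + ((0, 1) : ℤ × ℤ) ∈ X ∧ w + ((1, 1) : ℤ × ℤ) ∈ X

/-- `X` is `L`-convex: convex, and any two cells are joined by a monotone path of cells
of `X` changing direction (horizontal to vertical or vice versa) at most once. -/
def IsLConvexPoly (X : Finset (ℤ × ℤ)) : Prop :=
  IsConvexPoly X ∧ ∀ c ∈ X, ∀ d ∈ X,
    ((∀ x : ℤ, min c.1 d.1 ≤ x → x ≤ max c.1 d.1 → ((x, c.2) : ℤ × ℤ) ∈ X) ∧
     (∀ y : ℤ, min c.2 d.2 ≤ y → y ≤ max c.2 d.2 → ((d.1, y) : ℤ × ℤ) ∈ X)) ∨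
    ((∀ y : ℤ, min c.2 d.2 ≤ y → y ≤ max c.2 d.2 → ((c.1, y) : ℤ × ℤ) ∈ X) ∧
     (∀ x : ℤ, min c.1 d.1 ≤ x → x ≤ max c.1 d.1 → ((x, d.2) : ℤ × ℤ) ∈ X))

/-- The vertex set `V(X)`: all corners of cells of `X`, partially ordered componentwise. -/
def Verts (X : Finset (ℤ × ℤ)) : Set (ℤ × ℤ) :=
  {v | ∃ c ∈ X, v = c ∨ v = c - ((1, 0) : ℤ × ℤ) ∨
    v = c - ((0, 1) : ℤ × ℤ) ∨ v = c - ((1, 1) : ℤ × ℤ)}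

/-- Setup: `V(X) ⊆ ℕ²` is a sublattice of `ℕ²` (closed under componentwise max and min)
with minimum `(0,0)` and maximum `(m,n)`. -/
def LatticeSetup (X : Finset (ℤ × ℤ)) (m n : ℕ) : Prop :=
  (∀ a ∈ Verts X, ∀ b ∈ Verts X, a ⊔ b ∈ Verts X ∧ a ⊓ b ∈ Verts X) ∧
  ((0, 0) : ℤ × ℤ) ∈ Verts X ∧ (((m : ℤ), (n : ℤ)) : ℤ × ℤ) ∈ Verts X ∧
  ∀ v ∈ Verts X, ((0, 0) : ℤ × ℤ) ≤ v ∧ v ≤ (((m : ℤ), (n : ℤ)) : ℤ × ℤ)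

/-- Join-irreducible elements of the lattice `V(X)`: nonminimal elements that are not
the join of two elements strictly below them. -/
def JoinIrr (X : Finset (ℤ × ℤ)) : Set (ℤ × ℤ) :=
  {p | p ∈ Verts X ∧ (∃ q ∈ Verts X, q < p) ∧
    ∀ a ∈ Verts X, ∀ b ∈ Verts X, a < p → b < p → a ⊔ b ≠ p}

/-- `ω` is an injective order-preserving map from `JI(X)` to `ℕ`. -/
def OmegaOK (X : Finset (ℤ × ℤ)) (ω : ℤ × ℤ → ℕ) : Prop :=
  Set.InjOn ω (JoinIrr X) ∧
  ∀ p ∈ JoinIrr X, ∀ q ∈ JoinIrr X, p ≤ q → ω p ≤ ω q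

/-- A maximal chain of `V(X)`, written as a monotone unit lattice path
`μ 0 = (0,0) < μ 1 < ⋯ < μ (m+n) = (m,n)` through vertices of `X`
(normalized by `μ i = (m,n)` for `i ≥ m+n`). -/
def IsMaxChainPath (X : Finset (ℤ × ℤ)) (m n : ℕ) (μ : ℕ → ℤ × ℤ) : Prop :=
  μ 0 = (0, 0) ∧
  (∀ i, i < m + n → μ (i + 1) - μ i = ((1, 0) : ℤ × ℤ) ∨
    μ (i + 1) - μ i = ((0, 1) : ℤ × ℤ)) ∧
  (∀ i, m + n ≤ i → μ i = (((m : ℤ), (n : ℤ)) : ℤ × ℤ)) ∧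
  (∀ i, i ≤ m + n → μ i ∈ Verts X)

/-- `i` is a descent of the maximal chain `μ`:  `ω p_i > ω p_{i+1}`, where `p_j` is the
unique join-irreducible `p` with `p ≤ μ j` and `p ≰ μ (j-1)`. -/
def DescentAt (X : Finset (ℤ × ℤ)) (ω : ℤ × ℤ → ℕ) (μ : ℕ → ℤ × ℤ) (i : ℕ) : Prop :=
  ∃ p ∈ JoinIrr X, ∃ q ∈ JoinIrr X,
    p ≤ μ i ∧ ¬ p ≤ μ (i - 1) ∧ q ≤ μ (i + 1) ∧ ¬ q ≤ μ i ∧ ω q < ω p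

/-- The descent set of a maximal chain: descents `i` with `1 ≤ i ≤ m+n-1`. -/
def Des (X : Finset (ℤ × ℤ)) (m n : ℕ) (ω : ℤ × ℤ → ℕ) (μ : ℕ → ℤ × ℤ) : Set ℕ :=
  {i | 1 ≤ i ∧ i < m + n ∧ DescentAt X ω μ i}

/-- `|M_k(X)|`: the number of maximal chains of `V(X)` with exactly `k` descents. -/
noncomputable def numChains (X : Finset (ℤ × ℤ)) (m n : ℕ) (ω : ℤ × ℤ → ℕ) (k : ℕ) : ℕ :=
  Set.ncard {μ : ℕ → ℤ × ℤ | IsMaxChainPath X m n μ ∧ (Des X m n ω μ).ncard = k}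

/-- A `k`-rook configuration in `X`: `k` cells of `X`, no two in the same row or column. -/
def IsRookConfig (X : Finset (ℤ × ℤ)) (k : ℕ) (S : Finset (ℤ × ℤ)) : Prop :=
  ↑S ⊆ (↑X : Set (ℤ × ℤ)) ∧ S.card = k ∧
  ∀ c ∈ S, ∀ d ∈ S, c ≠ d → c.1 ≠ d.1 ∧ c.2 ≠ d.2

/-- `r_k`: the number of `k`-rook configurations in `X`. -/
noncomputable def rook (X : Finset (ℤ × ℤ)) (k : ℕ) : ℕ :=
  Set.ncard {S : Finset (ℤ × ℤ) | IsRookConfig X k S}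

/-- The map `ψ`: sends a maximal chain `μ` to the set of cells `C (μ (i+1))` for `i ∈ Des μ`. -/
def psi (X : Finset (ℤ × ℤ)) (m n : ℕ) (ω : ℤ × ℤ → ℕ) (μ : ℕ → ℤ × ℤ) :
    Set (ℤ × ℤ) :=
  (fun i => μ (i + 1)) '' Des X m n ω μ

/-- The ideal `I_X` of the polyomino ring: generated by the inner 2-minors
`x_a x_b - x_c x_d` for intervals `[a,b]` of `V(X)`. -/
noncomputable def polyominoIdeal (kk : Type*) [Field kk] (X : Finset (ℤ × ℤ)) :
    Ideal (MvPolynomial (Verts X) kk) :=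
  Ideal.span {f | ∃ a b c d : Verts X,
    (a : ℤ × ℤ) < (b : ℤ × ℤ) ∧
    (c : ℤ × ℤ) = (((a : ℤ × ℤ).1, (b : ℤ × ℤ).2) : ℤ × ℤ) ∧
    (d : ℤ × ℤ) = (((b : ℤ × ℤ).1, (a : ℤ × ℤ).2) : ℤ × ℤ) ∧
    f = MvPolynomial.X a * MvPolynomial.X b - MvPolynomial.X c * MvPolynomial.X d}

/-- `dim_k (k[X])_i`: the dimension of the degree-`i` graded component of `k[X] = R/I_X`,
realized as the image of the homogeneous degree-`i` part of `R` in the quotient. -/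
noncomputable def hilbCoeff (kk : Type*) [Field kk] (X : Finset (ℤ × ℤ)) (i : ℕ) : ℕ :=
  Module.finrank kk (Submodule.map
    (Ideal.Quotient.mkₐ kk (polyominoIdeal kk X)).toLinearMap
    (MvPolynomial.homogeneousSubmodule (Verts X) kk i))

/-- The Hilbert series `HS(t) = Σ_{i ≥ 0} dim_k (k[X])_i t^i ∈ ℤ[[t]]`. -/
noncomputable def hilbSeries (kk : Type*) [Field kk] (X : Finset (ℤ × ℤ)) :
    PowerSeries ℤ :=
  PowerSeries.mk fun i => (hilbCoeff kk X i : ℤ)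

/-- The region `⋃ X ⊆ ℝ²` covered by the cells of `X`. -/
def Region (X : Finset (ℤ × ℤ)) : Set (ℝ × ℝ) :=
  ⋃ c ∈ X, Set.Icc (((c.1 : ℝ) - 1, (c.2 : ℝ) - 1) : ℝ × ℝ) (((c.1 : ℝ), (c.2 : ℝ)) : ℝ × ℝ)

/-- Left-boundary vertices: top-left corners of cells of `X` lying on the topological
boundary of the region `⋃ X ⊆ ℝ²`. -/
def LeftBdry (X : Finset (ℤ × ℤ)) : Set (ℤ × ℤ) :=
  {v | (∃ c ∈ X, v = c - ((1, 0) : ℤ × ℤ)) ∧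
    (((v.1 : ℝ), (v.2 : ℝ)) : ℝ × ℝ) ∈ frontier (Region X)}

/-- Bottom-boundary vertices: bottom-right corners of cells of `X` lying on the topological
boundary of the region `⋃ X ⊆ ℝ²`. -/
def BottomBdry (X : Finset (ℤ × ℤ)) : Set (ℤ × ℤ) :=
  {v | (∃ c ∈ X, v = c - ((0, 1) : ℤ × ℤ)) ∧
    (((v.1 : ℝ), (v.2 : ℝ)) : ℝ × ℝ) ∈ frontier (Region X)}


/-!
In a convex polyomino the vertices of a row form an interval: two vertices of the row lie on
cells of the two adjacent cell rows, connectivity forces those cell rows to share a column,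
and row convexity fills in the cells in between. Hence for vertices `u < v` there is a vertex
`u + (1,0)` or `u + (0,1)` below `v`. If `u` and `v` share a row or column this is the interval
property; otherwise the cells strictly north-east of `u` (among them a cell at `v`) are
connected to the cell at `u`, so one of them touches the boundary of that quadrant, giving a
vertex in the row or column of `u` beyond it.

A maximal chain contains `(0,0)` and `(m,n)`, and it cannot skip a value of `x + y`: if `z` is in the
chain and below `(m,n)`, let `t` be the next element of the chain; the unit step from `z`
towards `t` is comparable with the whole chain, so it already belongs to it. Since `x + y` is
strictly monotone, the chain meets each of the `m + n + 1` levels exactly once.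
-/

theorem Relation.ReflTransGen.exists_rel_of_not {α : Type*} {r : α → α → Prop} {P : α → Prop}
    {a b : α} (h : Relation.ReflTransGen r a b) (ha : P a) (hb : ¬ P b) :
    ∃ x y, r x y ∧ P x ∧ ¬ P y := by
  induction h with
  | refl => exact absurd ha hb
  | @tail y z _ hyz ih =>
    by_cases hy : P y
    · exact ⟨y, z, hyz, hy, hb⟩
    · exact ih hy

section Polyomino

variable {X : Finset (ℤ × ℤ)}

theorem adj_swap {c d : ℤ × ℤ} : Adj c.swap d.swap ↔ Adj c d := by
  unfold Adj
  simp only [Prod.fst_swap, Prod.snd_swap]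
  tauto

theorem mem_verts_iff {v : ℤ × ℤ} :
    v ∈ Verts X ↔ ∃ c ∈ X, v ≤ c ∧ c ≤ v + (1, 1) := by
  refine exists_congr fun c => and_congr_right fun _ => ?_
  simp only [Prod.le_def, Prod.ext_iff, Prod.fst_sub, Prod.snd_sub, Prod.fst_add, Prod.snd_add]
  omega

theorem mem_verts_image_swap {v : ℤ × ℤ} :
    v ∈ Verts (X.image Prod.swap) ↔ v.swap ∈ Verts X := by
  simp only [mem_verts_iff, Finset.exists_mem_image]
  refine exists_congr fun c => and_congr_right fun _ => ?_
  rw [← Prod.swap_le_swap, Prod.swap_swap, ← Prod.swap_le_swap (x := c.swap)]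
  simp

theorem IsPolyomino.image_swap (hX : IsPolyomino X) : IsPolyomino (X.image Prod.swap) := by
  refine ⟨hX.1.image _, ?_⟩
  simp only [Finset.forall_mem_image]
  intro c hc d hd
  exact (hX.2 c hc d hd).lift Prod.swap fun a b ⟨ha, hb, hab⟩ =>
    ⟨Finset.mem_image_of_mem _ ha, Finset.mem_image_of_mem _ hb, adj_swap.mpr hab⟩

theorem IsConvexPoly.image_swap (hX : IsConvexPoly X) : IsConvexPoly (X.image Prod.swap) := by
  have mem : ∀ p q : ℤ, (p, q) ∈ X.image Prod.swap ↔ (q, p) ∈ X := fun p q => by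
    simp [Finset.mem_image, Prod.swap]
  exact ⟨fun a b x y => by simpa only [mem] using hX.2 a b x y,
    fun a b x y => by simpa only [mem] using hX.1 a b x y⟩

theorem IsConvexPoly.mem_of_mem_row (hX : IsConvexPoly X) {a b s y : ℤ} (ha : (a, y) ∈ X)
    (hb : (b, y) ∈ X) (hs : s ∈ Set.uIcc a b) : (s, y) ∈ X := by
  rcases Set.mem_uIcc.mp hs with ⟨h₁, h₂⟩ | ⟨h₁, h₂⟩
  · exact hX.1 a b s y ha hb h₁ h₂
  · exact hX.1 b a s y hb ha h₁ h₂

theorem IsPolyomino.exists_adj_of_not (hX : IsPolyomino X) {P : ℤ × ℤ → Prop} {c d : ℤ × ℤ}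
    (hc : c ∈ X) (hd : d ∈ X) (hPc : P c) (hPd : ¬ P d) :
    ∃ a ∈ X, ∃ b ∈ X, Adj a b ∧ P a ∧ ¬ P b := by
  obtain ⟨a, b, ⟨ha, hb, hab⟩, hPa, hPb⟩ := (hX.2 c hc d hd).exists_rel_of_not hPc hPd
  exact ⟨a, ha, b, hb, hab, hPa, hPb⟩

theorem IsPolyomino.exists_vertical_pair_of_adjacent_rows (hX : IsPolyomino X) {p p' q : ℤ}
    (h : (p, q) ∈ X) (h' : (p', q + 1) ∈ X) : ∃ x, (x, q) ∈ X ∧ (x, q + 1) ∈ X := by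
  obtain ⟨a, ha, b, hb, hab, hPa, hPb⟩ :=
    hX.exists_adj_of_not (P := fun c => c.2 ≤ q) h h' le_rfl (by simp)
  unfold Adj at hab
  refine ⟨a.1, ?_, ?_⟩
  · convert ha using 1
    exact Prod.ext rfl (by dsimp only; omega)
  · convert hb using 1
    exact Prod.ext (by dsimp only; omega) (by dsimp only; omega)

theorem IsConvexPoly.mem_or_mem_of_adjacent_rows (hpoly : IsPolyomino X) (hconv : IsConvexPoly X)
    {p p' q s : ℤ} (h : (p, q) ∈ X) (h' : (p', q + 1) ∈ X) (hs : s ∈ Set.uIcc p p') :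
    (s, q) ∈ X ∨ (s, q + 1) ∈ X := by
  obtain ⟨x, hx, hx'⟩ := hpoly.exists_vertical_pair_of_adjacent_rows h h'
  have : s ∈ Set.uIcc p x ∨ s ∈ Set.uIcc x p' := by
    simp only [Set.mem_uIcc] at hs ⊢
    omega
  exact this.imp (hconv.mem_of_mem_row h hx) (hconv.mem_of_mem_row hx' h')

theorem IsConvexPoly.mem_verts_succ_of_row (hpoly : IsPolyomino X) (hconv : IsConvexPoly X)
    {a b y : ℤ} (ha : (a, y) ∈ Verts X) (hb : (b, y) ∈ Verts X) (hab : a < b) :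
    (a + 1, y) ∈ Verts X := by
  simp only [mem_verts_iff, Prod.le_def, Prod.mk_add_mk, Prod.exists] at ha hb ⊢
  obtain ⟨p, q, hpq, ⟨hp, hq⟩, hp', hq'⟩ := ha
  obtain ⟨p', q', hpq', ⟨hp₁, hq₁⟩, hp₁', hq₁'⟩ := hb
  suffices ∃ r, y ≤ r ∧ r ≤ y + 1 ∧ (a + 1, r) ∈ X by
    obtain ⟨r, hr, hr', hmem⟩ := this
    exact ⟨a + 1, r, hmem, by omega⟩
  have hs : a + 1 ∈ Set.uIcc p p' := Set.mem_uIcc.mpr (by omega)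
  rcases (show q = q' ∨ (q = y ∧ q' = y + 1) ∨ (q = y + 1 ∧ q' = y) by omega)
    with hqq | ⟨hq₀, hq₀'⟩ | ⟨hq₀, hq₀'⟩
  · subst hqq
    exact ⟨q, hq, hq', hconv.mem_of_mem_row hpq hpq' hs⟩
  · subst hq₀ hq₀'
    rcases hconv.mem_or_mem_of_adjacent_rows hpoly hpq hpq' hs with h | h
    · exact ⟨_, le_rfl, by omega, h⟩
    · exact ⟨_, by omega, le_rfl, h⟩
  · subst hq₀ hq₀'
    rcases hconv.mem_or_mem_of_adjacent_rows hpoly hpq' hpq (Set.uIcc_comm p p' ▸ hs) with h | h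
    · exact ⟨_, le_rfl, by omega, h⟩
    · exact ⟨_, by omega, le_rfl, h⟩

theorem IsConvexPoly.mem_verts_succ_of_col (hpoly : IsPolyomino X) (hconv : IsConvexPoly X)
    {a b x : ℤ} (ha : (x, a) ∈ Verts X) (hb : (x, b) ∈ Verts X) (hab : a < b) :
    (x, a + 1) ∈ Verts X :=
  mem_verts_image_swap.mp <| hconv.image_swap.mem_verts_succ_of_row hpoly.image_swap
    (mem_verts_image_swap.mpr ha) (mem_verts_image_swap.mpr hb) hab

theorem IsPolyomino.exists_mem_quadrant_boundary (hX : IsPolyomino X) {u v : ℤ × ℤ}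
    (hu : u ∈ Verts X) (hv : v ∈ Verts X) (h₁ : u.1 < v.1) (h₂ : u.2 < v.2) :
    ∃ b ∈ X, u.1 < b.1 ∧ u.2 < b.2 ∧ (b.1 = u.1 + 1 ∨ b.2 = u.2 + 1) := by
  obtain ⟨c, hc, huc, hcu⟩ := mem_verts_iff.mp hu
  obtain ⟨d, hd, hvd, -⟩ := mem_verts_iff.mp hv
  simp only [Prod.le_def, Prod.fst_add, Prod.snd_add] at huc hcu hvd
  by_cases hcQ : u.1 < c.1 ∧ u.2 < c.2
  · exact ⟨c, hc, hcQ.1, hcQ.2, by omega⟩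
  obtain ⟨a, -, b, hb, hab, haQ, hbQ⟩ :=
    hX.exists_adj_of_not (P := fun e => ¬ (u.1 < e.1 ∧ u.2 < e.2)) hc hd hcQ (by omega)
  unfold Adj at hab
  exact ⟨b, hb, by omega⟩

theorem IsConvexPoly.exists_unit_step_of_lt (hpoly : IsPolyomino X)
    (hconv : IsConvexPoly X) {u v : ℤ × ℤ} (hu : u ∈ Verts X) (hv : v ∈ Verts X) (huv : u < v) :
    ∃ w ∈ Verts X, u ≤ w ∧ w ≤ v ∧ w.1 + w.2 = u.1 + u.2 + 1 := by
  obtain ⟨h₁, h₂⟩ := Prod.le_def.mp huv.le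
  have right {b : ℤ} (hb : (b, u.2) ∈ Verts X) (hub : u.1 < b) (huv₁ : u.1 < v.1) :
      ∃ w ∈ Verts X, u ≤ w ∧ w ≤ v ∧ w.1 + w.2 = u.1 + u.2 + 1 :=
    ⟨(u.1 + 1, u.2), hconv.mem_verts_succ_of_row hpoly hu hb hub,
      Prod.le_def.mpr (by omega), Prod.le_def.mpr (by omega), by ring⟩
  have up {b : ℤ} (hb : (u.1, b) ∈ Verts X) (hub : u.2 < b) (huv₂ : u.2 < v.2) :
      ∃ w ∈ Verts X, u ≤ w ∧ w ≤ v ∧ w.1 + w.2 = u.1 + u.2 + 1 :=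
    ⟨(u.1, u.2 + 1), hconv.mem_verts_succ_of_col hpoly hu hb hub,
      Prod.le_def.mpr (by omega), Prod.le_def.mpr (by omega), by ring⟩
  rcases h₂.eq_or_lt with h₂ | h₂
  · have h₁' : u.1 < v.1 := lt_of_le_of_ne h₁ fun h => huv.ne (Prod.ext h h₂)
    exact right (h₂ ▸ hv) h₁' h₁'
  rcases h₁.eq_or_lt with h₁ | h₁
  · exact up (h₁ ▸ hv) h₂ h₂
  obtain ⟨b, hb, hub₁, hub₂, hb₁ | hb₂⟩ := hpoly.exists_mem_quadrant_boundary hu hv h₁ h₂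
  · exact up (mem_verts_iff.mpr ⟨b, hb, by simp [Prod.le_def]; omega⟩) hub₂ h₂
  · exact right (mem_verts_iff.mpr ⟨b, hb, by simp [Prod.le_def]; omega⟩) hub₁ h₁

end Polyomino

section Chains

variable {α : Type*} [PartialOrder α]

def IsMaxChainIn (S c : Set α) : Prop :=
  c ⊆ S ∧ IsChain (· ≤ ·) c ∧ ∀ c' : Set α, c' ⊆ S → IsChain (· ≤ ·) c' → c ⊆ c' → c' = c

theorem IsChain.lt_of_monotone_of_lt {β : Type*} [Preorder β] {c : Set α} {r : α → β}
    (hc : IsChain (· ≤ ·) c) (hr : Monotone r) {x y : α} (hx : x ∈ c) (hy : y ∈ c)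
    (h : r x < r y) : x < y :=
  have hyx : ¬ y ≤ x := fun hyx => (hr hyx).not_gt h
  lt_of_le_not_ge ((hc.total hx hy).resolve_right hyx) hyx

theorem IsChain.injOn_of_strictMono {β : Type*} [Preorder β] {c : Set α} {r : α → β}
    (hc : IsChain (· ≤ ·) c) (hr : StrictMono r) : Set.InjOn r c := by
  intro x hx y hy h
  by_contra hne
  rcases hc hx hy hne with hxy | hyx
  · exact (hr (hxy.lt_of_ne hne)).ne h
  · exact (hr (hyx.lt_of_ne' hne)).ne' h

namespace IsMaxChainIn

variable {S c : Set α}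

theorem mem_of_forall_le_or_le (hc : IsMaxChainIn S c) {b : α} (hb : b ∈ S)
    (hcomp : ∀ x ∈ c, b ≤ x ∨ x ≤ b) : b ∈ c :=
  hc.2.2 _ (Set.insert_subset hb hc.1) (hc.2.1.insert fun x hx _ => hcomp x hx)
    (Set.subset_insert b c) ▸ Set.mem_insert b c

theorem exists_mem_eq_of_unit_steps (hc : IsMaxChainIn S c) (hS : S.Finite) {r : α → ℤ}
    (hr : Monotone r) (hstep : ∀ u ∈ S, ∀ v ∈ S, u < v → ∃ w ∈ S, u ≤ w ∧ w ≤ v ∧ r w = r u + 1)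
    {x y : α} (hx : x ∈ c) (hy : y ∈ c) {k : ℤ} (hxk : r x ≤ k) (hky : k ≤ r y) :
    ∃ z ∈ c, r z = k := by
  induction k, hxk using Int.leInduction with
  | base => exact ⟨x, hx, rfl⟩
  | succ k _ ih =>
    obtain ⟨z, hz, rfl⟩ := ih (by omega)
    obtain ⟨t, ⟨htc, hzt⟩, htmin⟩ :=
      (hS.subset ((Set.sep_subset _ _).trans hc.1)).exists_minimal
        ⟨y, hy, hc.2.1.lt_of_monotone_of_lt hr hz hy (by omega)⟩
    obtain ⟨w, hwS, hzw, hwt, hw⟩ := hstep z (hc.1 hz) t (hc.1 htc) hzt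
    refine ⟨w, hc.mem_of_forall_le_or_le hwS fun s hs => ?_, hw⟩
    rcases hc.2.1.total hz hs with hzs | hsz
    · rcases hzs.eq_or_lt with rfl | hzs
      · exact Or.inr hzw
      · exact Or.inl <| hwt.trans <|
          (hc.2.1.total htc hs).elim id fun hst => htmin ⟨hs, hzs⟩ hst
    · exact Or.inr (hsz.trans hzw)

end IsMaxChainIn

end Chains

theorem strictMono_fst_add_snd : StrictMono fun v : ℤ × ℤ => v.1 + v.2 := by
  intro x y h
  rcases Prod.lt_iff.mp h with h | h <;> dsimp only <;> omega

theorem Prod.sub_eq_of_le_of_fst_add_snd_eq {p q : ℤ × ℤ} (h : p ≤ q)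
    (hs : q.1 + q.2 = p.1 + p.2 + 1) : q - p = (1, 0) ∨ q - p = (0, 1) := by
  obtain ⟨h₁, h₂⟩ := h
  simp only [Prod.ext_iff, Prod.fst_sub, Prod.snd_sub]
  omega

theorem maximal_chains_are_lattice_paths (X : Finset (ℤ × ℤ)) (m n : ℕ)
    (hpoly : IsPolyomino X) (hconv : IsConvexPoly X)
    (hlat : LatticeSetup X m n)
    (c : Set (ℤ × ℤ)) (hc : c ⊆ Verts X) (hchain : IsChain (· ≤ ·) c)
    (hmax : ∀ c' : Set (ℤ × ℤ), c' ⊆ Verts X → IsChain (· ≤ ·) c' → c ⊆ c' → c' = c) :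
    c.ncard = m + n + 1 ∧
      ∃ μ : ℕ → ℤ × ℤ, IsMaxChainPath X m n μ ∧ c = μ '' Set.Iic (m + n) := by
  obtain ⟨-, h0, hmn, hbox⟩ := hlat
  have hmc : IsMaxChainIn (Verts X) c := ⟨hc, hchain, hmax⟩
  have h0c : (0, 0) ∈ c := hmc.mem_of_forall_le_or_le h0 fun x hx => .inl (hbox x (hc hx)).1
  have hmnc : ((m : ℤ), (n : ℤ)) ∈ c :=
    hmc.mem_of_forall_le_or_le hmn fun x hx => .inr (hbox x (hc hx)).2
  have hlevel (i : ℕ) : ∃ z ∈ c, z.1 + z.2 = (min i (m + n) : ℕ) :=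
    hmc.exists_mem_eq_of_unit_steps ((Set.finite_Icc _ _).subset hbox)
      strictMono_fst_add_snd.monotone
      (fun _ hu _ hv huv => hconv.exists_unit_step_of_lt hpoly hu hv huv) h0c hmnc
      (by simp; omega) (by simp)
  choose μ hμc hμr using hlevel
  have hinj := hchain.injOn_of_strictMono strictMono_fst_add_snd
  have himage : c = μ '' Set.Iic (m + n) := by
    refine (Set.image_subset_iff.mpr fun i _ => hμc i).antisymm' fun x hx => ?_
    obtain ⟨⟨hx₁, hx₂⟩, hx₁', hx₂'⟩ := hbox x (hc hx)
    refine ⟨(x.1 + x.2).toNat, Set.mem_Iic.mpr (by omega), hinj (hμc _) hx ?_⟩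
    simp only [hμr]
    omega
  have hμinj : Set.InjOn μ (Set.Iic (m + n)) := fun i hi j hj h => by
    have := congrArg (fun v : ℤ × ℤ => v.1 + v.2) h
    simp only [hμr] at this
    simp only [Set.mem_Iic] at hi hj
    omega
  refine ⟨?_, μ, ⟨?_, fun i hi => ?_, fun i hi => ?_, fun i _ => hc (hμc i)⟩, himage⟩
  · rw [himage, hμinj.ncard_image, ← Finset.coe_Iic, Set.ncard_coe_finset, Nat.card_Iic]
  · exact hinj (hμc 0) h0c (by simp [hμr])
  · refine Prod.sub_eq_of_le_of_fst_add_snd_eq (hchain.lt_of_monotone_of_lt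
      strictMono_fst_add_snd.monotone (hμc i) (hμc (i + 1)) ?_).le ?_ <;>
    · simp only [hμr]
      omega
  · exact hinj (hμc i) hmnc (by simp only [hμr]; omega)
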